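/- arXiv:1508.03600 — 4 statements merged into one kernel-verified Lean document; each statement's English description precedes it below -/
import Mathlib

section
/- Greedy 4-tuple-removal is a 4-approximation for outlier embedding into tree metrics: let (X, ρ) be a finite metric space and suppose an algorithm repeatedly finds a 4-tuple (x,y,z,w) violating the four-point condition and removes all four points, terminating with removed set O when no violating 4-tuple remains. Then for any O* ⊆ X such that (X \ O*, ρ) satisfies the four-point condition, |O| ≤ 4|O*|. -/
/-- Greedy 4-tuple-removal is a 4-approximation for outlier embedding into tree metrics. -/
theorem stmt5 {X : Type*} [Fintype X] [DecidableEq X] [MetricSpace X]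
    {m : ℕ} (T : Fin m → Finset X)
    (hcard : ∀ i, (T i).card = 4)
    (hdisj : ∀ i j, i ≠ j → Disjoint (T i) (T j))
    (hviol : ∀ i, ∃ x ∈ T i, ∃ y ∈ T i, ∃ z ∈ T i, ∃ w ∈ T i,
      dist x y + dist z w > max (dist x z + dist y w) (dist x w + dist y z))
    (O : Finset X) (hO : O = Finset.univ.biUnion T)
    (hterm : ∀ x ∈ Finset.univ \ O, ∀ y ∈ Finset.univ \ O, ∀ z ∈ Finset.univ \ O,
      ∀ w ∈ Finset.univ \ O,
      dist x y + dist z w ≤ max (dist x z + dist y w) (dist x w + dist y z))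
    (Ostar : Finset X)
    (hOstar : ∀ x ∈ Finset.univ \ Ostar, ∀ y ∈ Finset.univ \ Ostar,
      ∀ z ∈ Finset.univ \ Ostar, ∀ w ∈ Finset.univ \ Ostar,
      dist x y + dist z w ≤ max (dist x z + dist y w) (dist x w + dist y z)) :
    O.card ≤ 4 * Ostar.card := by
  -- each tuple meets Ostar
  have hmeet : ∀ i, ∃ a, a ∈ T i ∩ Ostar := by
    intro i
    by_contra h
    push_neg at h
    obtain ⟨x, hx, y, hy, z, hz, w, hw, hv⟩ := hviol i
    have hmem : ∀ a, a ∈ T i → a ∈ Finset.univ \ Ostar := by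
      intro a ha
      simp only [Finset.mem_sdiff, Finset.mem_univ, true_and]
      intro haO
      exact absurd (Finset.mem_inter.mpr ⟨ha, haO⟩) (h a)
    exact absurd (hOstar x (hmem x hx) y (hmem y hy) z (hmem z hz) w (hmem w hw))
      (not_le.mpr hv)
  choose f hf using hmeet
  have hfinj : Function.Injective f := by
    intro i j hij
    by_contra hne
    have h1 := (Finset.mem_inter.mp (hf i)).1
    have h2 := (Finset.mem_inter.mp (hf j)).1
    rw [hij] at h1
    exact Finset.disjoint_left.mp (hdisj i j hne) h1 h2
  have hm : m ≤ Ostar.card := by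
    have : (Finset.univ.image f).card ≤ Ostar.card := by
      apply Finset.card_le_card
      intro a ha
      obtain ⟨i, _, rfl⟩ := Finset.mem_image.mp ha
      exact (Finset.mem_inter.mp (hf i)).2
    rwa [Finset.card_image_of_injective _ hfinj, Finset.card_univ, Fintype.card_fin] at this
  have hOcard : O.card = 4 * m := by
    rw [hO, Finset.card_biUnion (fun i _ j _ hij => hdisj i j hij)]
    simp [hcard, Finset.sum_const, mul_comm]
  rw [hOcard]
  omega
end

section
/- Let (X, ρ) be a finite metric space with diam(X) = 1, and suppose that for every triple {x,y,z} ⊆ X we have ρ(x,y) ≤ max{ρ(x,z), ρ(z,y)} + 2ε. Let T be a minimum spanning tree of the complete weighted graph on X with weights ρ, and let δ(x,y) be the maximum edge weight on the x–y path in T. Then for all x, y ∈ X whose connecting path in T has at most 2^i edges, ρ(x,y) ≤ δ(x,y) + 2iε. Consequently, for all x, y ∈ X, |ρ(x,y) − δ(x,y)| ≤ 2ε·⌈log₂ n⌉ where n = |X|. -/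
/-!
Cutting a tree path of length at most `2 ^ (i + 1)` in the middle and applying the approximate
three-point condition once at the cut vertex gives, by induction on `i`, that `ρ(x, y)` exceeds
the largest edge weight on the path by at most `2 i ε`. Conversely, by the cycle property of a
minimum spanning tree, no edge on the tree path from `x` to `y` is heavier than `ρ(x, y)`:
otherwise exchanging it for the edge `xy` would give a lighter spanning tree. Since a tree path
has fewer than `n ≤ 2 ^ ⌈log₂ n⌉` edges, the two bounds combine to the distortion estimate.
-/

def edgeDist {X : Type*} [PseudoMetricSpace X] : Sym2 X → ℝ :=
  Sym2.lift ⟨dist, fun a b => dist_comm a b⟩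

@[simp]
lemma edgeDist_mk {X : Type*} [PseudoMetricSpace X] (x y : X) : edgeDist s(x, y) = dist x y :=
  rfl

namespace SimpleGraph

variable {V M : Type*}

namespace Walk

section MaxWeight

variable [LinearOrder M] [Zero M] (w : Sym2 V → M) {G : SimpleGraph V}

def maxWeight {u v : V} (p : G.Walk u v) : M :=
  (p.edges.map w).foldr max 0

@[simp]
lemma maxWeight_nil {u : V} : (nil : G.Walk u u).maxWeight w = 0 :=
  rfl

@[simp]
lemma maxWeight_cons {u v x : V} (h : G.Adj u v) (p : G.Walk v x) :
    (cons h p).maxWeight w = max (w s(u, v)) (p.maxWeight w) :=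
  rfl

lemma maxWeight_nonneg {u v : V} (p : G.Walk u v) : 0 ≤ p.maxWeight w := by
  induction p <;> simp [*]

lemma maxWeight_append {u v x : V} (p : G.Walk u v) (q : G.Walk v x) :
    (p.append q).maxWeight w = max (p.maxWeight w) (q.maxWeight w) := by
  induction p with
  | nil => simp [maxWeight_nonneg]
  | cons h p ih => simp [ih, max_assoc]

lemma maxWeight_le {u v : V} {p : G.Walk u v} {c : M} (hc : 0 ≤ c)
    (h : ∀ e ∈ p.edges, w e ≤ c) : p.maxWeight w ≤ c := by
  induction p with
  | nil => simpa
  | cons h p ih => simp_all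

end MaxWeight

end Walk

end SimpleGraph

theorem dist_le_maxWeight_add_of_length_le_two_pow {X : Type*} [PseudoMetricSpace X] {ε : ℝ}
    (htriple : ∀ x y z : X, dist x y ≤ max (dist x z) (dist z y) + 2 * ε)
    {G : SimpleGraph X} (i : ℕ) {x y : X} (p : G.Walk x y) (hp : p.length ≤ 2 ^ i) :
    dist x y ≤ p.maxWeight edgeDist + 2 * i * ε := by
  induction i generalizing x y with
  | zero =>
    rcases p with _ | ⟨_, _ | ⟨_, _⟩⟩
    · simp
    · simp
    · simp at hp
  | succ i ih =>
    have h₁ := ih (p.take (2 ^ i)) (by simp)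
    have h₂ := ih (p.drop (2 ^ i)) <| by
      rw [pow_succ] at hp
      simp only [SimpleGraph.Walk.drop_length]
      omega
    rw [← p.append_take_drop_eq (2 ^ i), SimpleGraph.Walk.maxWeight_append]
    calc dist x y ≤ max (dist x (p.getVert (2 ^ i))) (dist (p.getVert (2 ^ i)) y) + 2 * ε :=
          htriple _ _ _
      _ ≤ max ((p.take (2 ^ i)).maxWeight edgeDist + 2 * i * ε)
            ((p.drop (2 ^ i)).maxWeight edgeDist + 2 * i * ε) + 2 * ε := by gcongr
      _ = _ := by rw [max_add_add_right]; push_cast; ring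

namespace SimpleGraph

variable {V M : Type*}

lemma edgeSet_sup_edge_deleteEdges {T : SimpleGraph V} {x y : V} (hxy : x ≠ y) (e : Sym2 V) :
    ((T ⊔ edge x y).deleteEdges {e}).edgeSet = insert s(x, y) T.edgeSet \ {e} := by
  rw [edgeSet_deleteEdges, edgeSet_sup, edgeSet_edge_of_ne hxy, Set.union_singleton]

lemma IsTree.isTree_sup_edge_deleteEdges [Finite V] {T : SimpleGraph V} (hT : T.IsTree)
    {x y : V} (hxy : x ≠ y) (hadj : ¬T.Adj x y) {p : T.Walk x y} (hp : p.IsPath) {e : Sym2 V}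
    (he : e ∈ p.edges) : ((T ⊔ edge x y).deleteEdges {e}).IsTree := by
  rw [isTree_iff_connected_and_card]
  constructor
  · -- `e` lies on the cycle closed by the new edge, so it is not a bridge of `T ⊔ edge x y`.
    induction e using Sym2.ind with | h a b =>
    have hyx : (T ⊔ edge x y).Adj y x :=
      Or.inr ((edge_adj x y y x).mpr ⟨Or.inr ⟨rfl, rfl⟩, hxy.symm⟩)
    have hcycle := Path.cons_isCycle ⟨p.mapLe le_sup_left, hp.mapLe le_sup_left⟩ hyx
      (by rw [Walk.edges_mapLe_eq_edges]; exact fun h => hadj (p.adj_of_mem_edges h).symm)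
    exact (hT.connected.mono le_sup_left).connected_delete_edge_of_not_isBridge fun hb =>
      hb.notMem_edges_of_isCycle hcycle (by simp [he])
  · have heT : e ∈ T.edgeSet := p.edges_subset_edgeSet he
    rw [Nat.card_coe_set_eq, edgeSet_sup_edge_deleteEdges hxy,
      Set.ncard_sdiff_singleton_of_mem (Set.mem_insert_of_mem _ heT),
      Set.ncard_insert_of_notMem (show s(x, y) ∉ T.edgeSet from hadj), Nat.add_sub_cancel,
      ← Nat.card_coe_set_eq]
    exact (isTree_iff_connected_and_card.mp hT).2

open scoped Classical in
lemma sum_edgeFinset_sup_edge_deleteEdges [Fintype V] [AddCommGroup M] (w : Sym2 V → M)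
    {T : SimpleGraph V} {x y : V} (hxy : x ≠ y) (hadj : ¬T.Adj x y) {e : Sym2 V}
    (he : e ∈ T.edgeSet) :
    ∑ f ∈ ((T ⊔ edge x y).deleteEdges {e}).edgeFinset, w f =
      ∑ f ∈ T.edgeFinset, w f + w s(x, y) - w e := by
  have : ((T ⊔ edge x y).deleteEdges {e}).edgeFinset = (insert s(x, y) T.edgeFinset).erase e := by
    ext f
    simp only [mem_edgeFinset, edgeSet_sup_edge_deleteEdges hxy, Finset.mem_erase,
      Finset.mem_insert, Set.mem_sdiff, Set.mem_insert_iff, Set.mem_singleton_iff]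
    tauto
  rw [this, Finset.sum_erase_eq_sub (by simp [he]), Finset.sum_insert (by simpa), add_comm]

open scoped Classical in
theorem IsTree.weight_le_of_mem_edges_of_minimal [Fintype V] [AddCommGroup M] [LinearOrder M]
    [IsOrderedAddMonoid M] {T : SimpleGraph V} (hT : T.IsTree) {w : Sym2 V → M}
    (hmin : ∀ T' : SimpleGraph V, T'.IsTree →
      ∑ e ∈ T.edgeFinset, w e ≤ ∑ e ∈ T'.edgeFinset, w e)
    {x y : V} {p : T.Walk x y} (hp : p.IsPath) {e : Sym2 V} (he : e ∈ p.edges) :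
    w e ≤ w s(x, y) := by
  by_cases hadj : T.Adj x y
  · obtain rfl : p = .cons hadj .nil := congrArg Subtype.val <|
      (hT.isAcyclic.subsingleton_path x y).elim ⟨p, hp⟩ (Path.singleton hadj)
    simp_all
  · have hxy : x ≠ y := by
      rintro rfl
      simp [Walk.eq_nil_iff_nil.mpr (Walk.isPath_iff_nil.mp hp)] at he
    have := hmin _ (hT.isTree_sup_edge_deleteEdges hxy hadj hp he)
    have hsum : ∑ f ∈ T.edgeFinset, w f ≤ ∑ f ∈ T.edgeFinset, w f + w s(x, y) - w e := by
      convert this using 1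
      convert (sum_edgeFinset_sup_edge_deleteEdges w hxy hadj (p.edges_subset_edgeSet he)).symm
    simpa [add_sub_assoc] using hsum

end SimpleGraph

open scoped Classical in
theorem stmt7_general {X : Type*} [Fintype X] [MetricSpace X]
    (ε : ℝ)
    (htriple : ∀ x y z : X, dist x y ≤ max (dist x z) (dist z y) + 2 * ε)
    (T : SimpleGraph X) (hT : T.IsTree)
    (hmin : ∀ T' : SimpleGraph X, T'.IsTree →
      ∑ e ∈ T.edgeFinset, Sym2.lift ⟨dist, fun a b => dist_comm a b⟩ e ≤
        ∑ e ∈ T'.edgeFinset, Sym2.lift ⟨dist, fun a b => dist_comm a b⟩ e)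
    (δ : X → X → ℝ)
    (hδ : ∀ x y : X, ∀ p : T.Path x y,
      δ x y = ((p : T.Walk x y).edges.map
        (Sym2.lift ⟨dist, fun a b => dist_comm a b⟩)).foldr max 0) :
    (∀ (i : ℕ) (x y : X), ∀ p : T.Path x y, (p : T.Walk x y).length ≤ 2 ^ i →
      dist x y ≤ δ x y + 2 * i * ε) ∧
    (∀ x y : X,
      |dist x y - δ x y| ≤ 2 * ε * (Nat.clog 2 (Fintype.card X) : ℝ)) := by
  have hδ' : ∀ x y (p : T.Path x y), δ x y = (p : T.Walk x y).maxWeight edgeDist := hδ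
  refine ⟨fun i x y p hp =>
    hδ' x y p ▸ dist_le_maxWeight_add_of_length_le_two_pow htriple i _ hp, fun x y => ?_⟩
  obtain ⟨q, hq, -⟩ := hT.existsUnique_path x y
  have hupper := dist_le_maxWeight_add_of_length_le_two_pow htriple (Nat.clog 2 (Fintype.card X))
    q (hq.length_lt.le.trans (Nat.le_pow_clog one_lt_two _))
  have hlower : q.maxWeight edgeDist ≤ dist x y :=
    SimpleGraph.Walk.maxWeight_le _ dist_nonneg fun e he =>
      hT.weight_le_of_mem_edges_of_minimal (w := edgeDist) hmin hq he
  rw [hδ' x y ⟨q, hq⟩, abs_sub_le_iff]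
  have hε : 0 ≤ ε := by simpa using htriple x x x
  have : 0 ≤ 2 * ε * (Nat.clog 2 (Fintype.card X) : ℝ) := by positivity
  constructor <;> linarith

open scoped Classical in
/-- Distortion bound for the ultrametric induced by an MST, under the approximate
three-point condition. -/
theorem stmt7 {X : Type*} [Fintype X] [MetricSpace X]
    (ε : ℝ) (hε : 0 ≤ ε)
    (hdiam_le : ∀ x y : X, dist x y ≤ 1)
    (hdiam_eq : ∃ x y : X, dist x y = 1)
    (htriple : ∀ x y z : X, dist x y ≤ max (dist x z) (dist z y) + 2 * ε)
    (T : SimpleGraph X) (hT : T.IsTree)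
    (hmin : ∀ T' : SimpleGraph X, T'.IsTree →
      ∑ e ∈ T.edgeFinset, Sym2.lift ⟨dist, fun a b => dist_comm a b⟩ e ≤
        ∑ e ∈ T'.edgeFinset, Sym2.lift ⟨dist, fun a b => dist_comm a b⟩ e)
    (δ : X → X → ℝ)
    (hδ : ∀ x y : X, ∀ p : T.Path x y,
      δ x y = ((p : T.Walk x y).edges.map
        (Sym2.lift ⟨dist, fun a b => dist_comm a b⟩)).foldr max 0) :
    (∀ (i : ℕ) (x y : X), ∀ p : T.Path x y, (p : T.Walk x y).length ≤ 2 ^ i →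
      dist x y ≤ δ x y + 2 * i * ε) ∧
    (∀ x y : X,
      |dist x y - δ x y| ≤ 2 * ε * (Nat.clog 2 (Fintype.card X) : ℝ)) :=
  stmt7_general ε htriple T hT hmin δ hδ
end

section
/- Vertex Cover reduction for ultrametric outlier embedding: given a graph G = (V, E) with V = {v_1,…,v_n}, fix 0 < ν < 1/4 and construct the metric space (U, d) with U = {u_1, w_1, …, u_n, w_n}, d(u_i, w_i) = 2ν, d(u_i, w_j) = d(w_i, w_j) = 1 for i ≠ j, and d(u_i, u_j) = 1 − ν if (v_i, v_j) ∈ E, d(u_i, u_j) = 1 otherwise. Then (a) d is a metric, and (b) the minimum size of a set O ⊆ U such that (U \ O, d) is an ultrametric equals the minimum size of a vertex cover of G. -/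
/-- Vertex Cover reduction for ultrametric outlier embedding: the constructed `d` is
a metric, and the minimum outlier size equals the minimum vertex cover size. -/
theorem stmt10 {n : ℕ} (G : SimpleGraph (Fin n)) (ν : ℝ) (hν : 0 < ν) (hν' : ν < 1/4)
    (d : (Fin n ⊕ Fin n) → (Fin n ⊕ Fin n) → ℝ)
    (hsymm : ∀ p q, d p q = d q p)
    (hdiag : ∀ p, d p p = 0)
    (huw_same : ∀ i, d (.inl i) (.inr i) = 2 * ν)
    (huw : ∀ i j, i ≠ j → d (.inl i) (.inr j) = 1)
    (hww : ∀ i j, i ≠ j → d (.inr i) (.inr j) = 1)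
    (huu_adj : ∀ i j, G.Adj i j → d (.inl i) (.inl j) = 1 - ν)
    (huu : ∀ i j, i ≠ j → ¬ G.Adj i j → d (.inl i) (.inl j) = 1) :
    ((∀ p q, 0 ≤ d p q) ∧ (∀ p q, d p q = 0 ↔ p = q) ∧
      (∀ p q r, d p r ≤ d p q + d q r)) ∧
    sInf {k : ℕ | ∃ O : Finset (Fin n ⊕ Fin n), O.card = k ∧
        ∀ x ∉ O, ∀ y ∉ O, ∀ z ∉ O, d x y ≤ max (d x z) (d z y)} =
      sInf {k : ℕ | ∃ C : Finset (Fin n), C.card = k ∧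
        ∀ i j, G.Adj i j → i ∈ C ∨ j ∈ C} := by
  have hrange : ∀ p q, p ≠ q → d p q = 1 - ν ∨ d p q = 1 ∨
      (d p q = 2*ν ∧ ((∃ i, p = Sum.inl i ∧ q = Sum.inr i) ∨
        (∃ i, p = Sum.inr i ∧ q = Sum.inl i))) := by
    intro p q hpq
    rcases p with i | i <;> rcases q with j | j
    · have hij : i ≠ j := by rintro rfl; exact hpq rfl
      by_cases hadj : G.Adj i j
      · exact Or.inl (huu_adj i j hadj)
      · exact Or.inr (Or.inl (huu i j hij hadj))
    · by_cases hij : i = j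
      · subst hij; exact Or.inr (Or.inr ⟨huw_same i, Or.inl ⟨i, rfl, rfl⟩⟩)
      · exact Or.inr (Or.inl (huw i j hij))
    · by_cases hij : i = j
      · subst hij
        exact Or.inr (Or.inr ⟨by rw [hsymm]; exact huw_same i, Or.inr ⟨i, rfl, rfl⟩⟩)
      · refine Or.inr (Or.inl ?_)
        rw [hsymm]; exact huw j i (Ne.symm hij)
    · have hij : i ≠ j := by rintro rfl; exact hpq rfl
      exact Or.inr (Or.inl (hww i j hij))
  have hpos : ∀ p q, p ≠ q → 0 < d p q := by
    intro p q h; rcases hrange p q h with h' | h' | ⟨h', -⟩ <;> rw [h'] <;> linarith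
  have hub : ∀ p q, d p q ≤ 1 := by
    intro p q
    by_cases h : p = q
    · rw [h, hdiag]; linarith
    · rcases hrange p q h with h' | h' | ⟨h', -⟩ <;> rw [h'] <;> linarith
  have hnonneg : ∀ p q, 0 ≤ d p q := by
    intro p q
    by_cases h : p = q
    · rw [h, hdiag]
    · exact (hpos p q h).le
  constructor
  · refine ⟨hnonneg, ?_, ?_⟩
    · intro p q
      constructor
      · intro h; by_contra h'; exact absurd h (ne_of_gt (hpos p q h'))
      · rintro rfl; exact hdiag p
    · intro p q r
      by_cases hpr : p = r
      · rw [hpr, hdiag]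
        have := hnonneg r q; have := hnonneg q r; linarith
      by_cases hpq : p = q
      · rw [hpq, hdiag]; linarith
      by_cases hqr : q = r
      · rw [hqr, hdiag]; linarith
      have hub' := hub p r
      rcases hrange p q hpq with h1 | h1 | ⟨h1, hp1⟩ <;>
        rcases hrange q r hqr with h2 | h2 | ⟨h2, hp2⟩
      · linarith
      · linarith
      · linarith
      · linarith
      · linarith
      · linarith
      · linarith
      · linarith
      · exfalso
        rcases hp1 with ⟨i, rfl, rfl⟩ | ⟨i, rfl, rfl⟩ <;>
          rcases hp2 with ⟨j, hq, rfl⟩ | ⟨j, hq, rfl⟩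
        · exact Sum.inr_ne_inl hq
        · exact hpr (by rw [Sum.inr.inj hq])
        · exact hpr (by rw [Sum.inl.inj hq])
        · exact Sum.inl_ne_inr hq
  · -- the sInf equality
    have hcover_to : ∀ (C : Finset (Fin n)), (∀ i j, G.Adj i j → i ∈ C ∨ j ∈ C) →
        ∃ O : Finset (Fin n ⊕ Fin n), O.card = C.card ∧
          ∀ x ∉ O, ∀ y ∉ O, ∀ z ∉ O, d x y ≤ max (d x z) (d z y) := by
      intro C hC
      refine ⟨C.image Sum.inl, Finset.card_image_of_injective _ Sum.inl_injective, ?_⟩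
      have hone : ∀ x ∉ C.image Sum.inl, ∀ y ∉ C.image Sum.inl,
          Sum.elim id id x ≠ Sum.elim id id y → d x y = 1 := by
        intro x hx y hy hne
        rcases x with i | i <;> rcases y with j | j <;>
          simp only [Sum.elim_inl, Sum.elim_inr, id_eq] at hne
        · have hi : i ∉ C := by simpa using hx
          have hj : j ∉ C := by simpa using hy
          have hnadj : ¬ G.Adj i j := by
            intro h
            rcases hC i j h with h' | h'
            · exact hi h'
            · exact hj h'
          exact huu i j hne hnadj
        · exact huw i j hne
        · rw [hsymm]; exact huw j i (Ne.symm hne)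
        · exact hww i j hne
      intro x hx y hy z hz
      by_cases hzx : Sum.elim id id z = Sum.elim id id x
      · by_cases hxy : Sum.elim id id x = Sum.elim id id y
        · have htwo : x = y ∨ z = x ∨ z = y := by
            rcases x with i | i <;> rcases y with j | j <;> rcases z with k | k <;>
              simp only [Sum.elim_inl, Sum.elim_inr, id_eq] at hzx hxy <;>
              subst hzx <;> subst hxy <;> simp
          rcases htwo with h | h | h
          · rw [h, hdiag]
            exact le_max_of_le_left (hnonneg y z)
          · rw [h]; exact le_max_right _ _
          · rw [h]; exact le_max_left _ _
        · have hzy : d z y = 1 := hone z hz y hy (by rw [hzx]; exact hxy)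
          calc d x y ≤ 1 := hub x y
            _ ≤ max (d x z) (d z y) := by rw [hzy]; exact le_max_right _ _
      · have hxz : d x z = 1 := hone x hx z hz (fun h => hzx h.symm)
        calc d x y ≤ 1 := hub x y
          _ ≤ max (d x z) (d z y) := by rw [hxz]; exact le_max_left _ _
    have houtlier_to : ∀ (O : Finset (Fin n ⊕ Fin n)),
        (∀ x ∉ O, ∀ y ∉ O, ∀ z ∉ O, d x y ≤ max (d x z) (d z y)) →
        ∃ C : Finset (Fin n), C.card ≤ O.card ∧ ∀ i j, G.Adj i j → i ∈ C ∨ j ∈ C := by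
      intro O hO
      refine ⟨O.image (Sum.elim id id), Finset.card_image_le, ?_⟩
      intro i j hadj
      by_contra hc
      push_neg at hc
      obtain ⟨hi, hj⟩ := hc
      have h1 : Sum.inl i ∉ O := fun h =>
        hi (by simpa using Finset.mem_image_of_mem (Sum.elim id id) h)
      have h2 : Sum.inr i ∉ O := fun h =>
        hi (by simpa using Finset.mem_image_of_mem (Sum.elim id id) h)
      have h3 : Sum.inl j ∉ O := fun h =>
        hj (by simpa using Finset.mem_image_of_mem (Sum.elim id id) h)
      have key := hO (Sum.inr i) h2 (Sum.inl j) h3 (Sum.inl i) h1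
      have hij : i ≠ j := G.ne_of_adj hadj
      rw [show d (Sum.inr i) (Sum.inl j) = 1 from by
            rw [hsymm]; exact huw j i (Ne.symm hij)] at key
      rw [show d (Sum.inr i) (Sum.inl i) = 2*ν from by
            rw [hsymm]; exact huw_same i] at key
      rw [huu_adj i j hadj] at key
      rcases le_max_iff.mp key with h | h <;> linarith
    have hne2 : {k : ℕ | ∃ C : Finset (Fin n), C.card = k ∧
        ∀ i j, G.Adj i j → i ∈ C ∨ j ∈ C}.Nonempty :=
      ⟨n, Finset.univ, by simp, fun i j _ => Or.inl (Finset.mem_univ i)⟩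
    have hne1 : {k : ℕ | ∃ O : Finset (Fin n ⊕ Fin n), O.card = k ∧
        ∀ x ∉ O, ∀ y ∉ O, ∀ z ∉ O, d x y ≤ max (d x z) (d z y)}.Nonempty :=
      ⟨Finset.univ.card, Finset.univ, rfl,
        fun x hx => absurd (Finset.mem_univ x) hx⟩
    apply le_antisymm
    · obtain ⟨C, hCcard, hCcov⟩ := Nat.sInf_mem hne2
      obtain ⟨O, hOcard, hOult⟩ := hcover_to C hCcov
      exact Nat.sInf_le ⟨O, by rw [hOcard, hCcard], hOult⟩
    · obtain ⟨O, hOcard, hOult⟩ := Nat.sInf_mem hne1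
      obtain ⟨C, hCle, hCcov⟩ := houtlier_to O hOult
      have h : sInf {k : ℕ | ∃ C : Finset (Fin n), C.card = k ∧
          ∀ i j, G.Adj i j → i ∈ C ∨ j ∈ C} ≤ C.card :=
        Nat.sInf_le ⟨C, rfl, hCcov⟩
      omega
end

section
/- In the tree-metric Vertex Cover reduction, the minimum size of a set O ⊆ X such that (X \ O, d) is a tree metric equals the minimum size of a vertex cover of G = (V, E). -/
/-!
Place the points on a star with centre `o` and one leg of length 2 per vertex `v_i`, with `y_i`
at distance 1 and `x_i` at distance 2 from `o`. The path metric of such a star is a tree metric,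
and `d` agrees with it except on pairs `x_i, x_j` for an edge `v_i v_j`, where it is shorter by `ν`.
Deleting `x_i` for `v_i` in a vertex cover therefore leaves a tree metric. Conversely, if an edge
`v_i v_j` has none of `x_i, y_i, x_j, y_j` deleted, these four points violate the four-point
condition: `d(x_i,y_j) + d(x_j,y_i) = 6` exceeds both `d(x_i,x_j) + d(y_i,y_j) = 6 - ν` and
`d(x_i,y_i) + d(x_j,y_j) = 2`. So the vertices whose leg meets a feasible deletion set form a
vertex cover of at most its size.
-/

open Finset

def FourPointOn {α : Type*} (d : α → α → ℝ) (s : Set α) : Prop :=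
  ∀ p ∈ s, ∀ q ∈ s, ∀ r ∈ s, ∀ t ∈ s, d p q + d r t ≤ max (d p r + d q t) (d p t + d q r)

theorem FourPointOn.congr {α : Type*} {d d' : α → α → ℝ} {s : Set α}
    (h : ∀ p ∈ s, ∀ q ∈ s, d p q = d' p q) (hd' : FourPointOn d' s) : FourPointOn d s := by
  intro p hp q hq r hr t ht
  simp only [h _ hp _ hq, h _ hr _ ht, h _ hp _ hr, h _ hq _ ht, h _ hp _ ht, h _ hq _ hr]
  exact hd' p hp q hq r hr t ht

/-- The path metric of a star whose legs are indexed by `β`, where `p` sits on the leg `leg p`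
at distance `height p` from the centre. -/
def spiderDist {α β : Type*} [DecidableEq β] (leg : α → β) (height : α → ℝ) (p q : α) : ℝ :=
  height p + height q - 2 * if leg p = leg q then min (height p) (height q) else 0

theorem fourPointOn_spiderDist {α β : Type*} [DecidableEq β] (leg : α → β) (height : α → ℝ)
    (h : ∀ p, 0 ≤ height p) (s : Set α) : FourPointOn (spiderDist leg height) s := by
  intro p _ q _ r _ t _
  -- In terms of the Gromov products `(p|q) = if leg p = leg q then min (height p) (height q)
  -- else 0` at the centre this reads `(p|q) + (r|t) ≥ min ((p|r) + (q|t)) ((p|t) + (q|r))`,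
  -- which is checked according to which of the four legs coincide.
  have := h p; have := h q; have := h r; have := h t
  simp only [spiderDist, le_max_iff]
  split_ifs <;> grind

@[simp]
theorem spiderDist_self {α β : Type*} [DecidableEq β] (leg : α → β) (height : α → ℝ) (p : α) :
    spiderDist leg height p p = 0 := by
  rw [spiderDist, if_pos rfl, min_self]
  ring

theorem Nat.sInf_le_sInf_of_forall_exists_le {S T : Set ℕ} (hS : S.Nonempty)
    (h : ∀ a ∈ S, ∃ b ∈ T, b ≤ a) : sInf T ≤ sInf S :=
  let ⟨_, hb, hle⟩ := h _ (Nat.sInf_mem hS)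
  (Nat.sInf_le hb).trans hle

namespace TreeMetricReduction

variable {n : ℕ}

/-- `o` is the centre, and `inr (inl i)`, `inr (inr i)` are `x_i`, `y_i` on the leg `some i`. -/
def leg : Unit ⊕ Fin n ⊕ Fin n → Option (Fin n) :=
  Sum.elim (fun _ => none) (Sum.elim some some)

def height : Unit ⊕ Fin n ⊕ Fin n → ℝ :=
  Sum.elim (fun _ => 0) (Sum.elim (fun _ => 2) (fun _ => 1))

theorem height_nonneg (p : Unit ⊕ Fin n ⊕ Fin n) : 0 ≤ height p := by
  rcases p with _ | _ | _ <;> norm_num [height]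

theorem dist_eq_spiderDist (G : SimpleGraph (Fin n))
    (d : (Unit ⊕ Fin n ⊕ Fin n) → (Unit ⊕ Fin n ⊕ Fin n) → ℝ)
    (hsymm : ∀ p q, d p q = d q p)
    (hdiag : ∀ p, d p p = 0)
    (hxy_same : ∀ i, d (.inr (.inl i)) (.inr (.inr i)) = 1)
    (hox : ∀ i, d (.inl ()) (.inr (.inl i)) = 2)
    (hoy : ∀ i, d (.inl ()) (.inr (.inr i)) = 1)
    (hyy : ∀ i j, i ≠ j → d (.inr (.inr i)) (.inr (.inr j)) = 2)
    (hxy : ∀ i j, i ≠ j → d (.inr (.inl i)) (.inr (.inr j)) = 3)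
    (hxx : ∀ i j, i ≠ j → ¬ G.Adj i j → d (.inr (.inl i)) (.inr (.inl j)) = 4)
    {p q : Unit ⊕ Fin n ⊕ Fin n}
    (hpq : ∀ i j, p = .inr (.inl i) → q = .inr (.inl j) → ¬ G.Adj i j) :
    d p q = spiderDist leg height p q := by
  rcases p with ⟨⟩ | i | i <;> rcases q with ⟨⟩ | j | j
  · rw [hdiag, spiderDist_self]
  · norm_num [spiderDist, leg, height, hox]
  · norm_num [spiderDist, leg, height, hoy]
  · norm_num [hsymm _ (.inl ()), spiderDist, leg, height, hox]
  · obtain rfl | hij := eq_or_ne i j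
    · rw [hdiag, spiderDist_self]
    · norm_num [spiderDist, leg, height, hij, hxx i j hij (hpq i j rfl rfl)]
  · obtain rfl | hij := eq_or_ne i j
    · norm_num [spiderDist, leg, height, hxy_same]
    · norm_num [spiderDist, leg, height, hij, hxy i j hij]
  · norm_num [hsymm _ (.inl ()), spiderDist, leg, height, hoy]
  · obtain rfl | hij := eq_or_ne i j
    · norm_num [hsymm (.inr (.inr i)), spiderDist, leg, height, hxy_same]
    · norm_num [hsymm (.inr (.inr i)), spiderDist, leg, height, hij, hxy j i hij.symm]
  · obtain rfl | hij := eq_or_ne i j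
    · rw [hdiag, spiderDist_self]
    · norm_num [spiderDist, leg, height, hij, hyy i j hij]

theorem fourPointOn_compl_image_of_isVertexCover (G : SimpleGraph (Fin n))
    (d : (Unit ⊕ Fin n ⊕ Fin n) → (Unit ⊕ Fin n ⊕ Fin n) → ℝ)
    (hsymm : ∀ p q, d p q = d q p)
    (hdiag : ∀ p, d p p = 0)
    (hxy_same : ∀ i, d (.inr (.inl i)) (.inr (.inr i)) = 1)
    (hox : ∀ i, d (.inl ()) (.inr (.inl i)) = 2)
    (hoy : ∀ i, d (.inl ()) (.inr (.inr i)) = 1)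
    (hyy : ∀ i j, i ≠ j → d (.inr (.inr i)) (.inr (.inr j)) = 2)
    (hxy : ∀ i j, i ≠ j → d (.inr (.inl i)) (.inr (.inr j)) = 3)
    (hxx : ∀ i j, i ≠ j → ¬ G.Adj i j → d (.inr (.inl i)) (.inr (.inl j)) = 4)
    {C : Finset (Fin n)} (hC : G.IsVertexCover C) :
    FourPointOn d (↑(C.image fun i => (.inr (.inl i) : Unit ⊕ Fin n ⊕ Fin n)))ᶜ := by
  refine FourPointOn.congr (d' := spiderDist leg height) ?_
    (fourPointOn_spiderDist _ _ height_nonneg _)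
  intro p hp q hq
  refine dist_eq_spiderDist G d hsymm hdiag hxy_same hox hoy hyy hxy hxx ?_
  rintro i j rfl rfl hij
  simp only [Set.mem_compl_iff, Finset.coe_image, Set.mem_image, Finset.mem_coe, Sum.inr.injEq,
    Sum.inl.injEq, exists_eq_right] at hp hq
  exact (hC hij).elim hp hq

def legCover (O : Finset (Unit ⊕ Fin n ⊕ Fin n)) : Finset (Fin n) :=
  univ.filter fun i => some i ∈ O.image leg

theorem card_legCover_le (O : Finset (Unit ⊕ Fin n ⊕ Fin n)) : (legCover O).card ≤ O.card :=
  calc (legCover O).card ≤ (O.image leg).card :=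
        card_le_card_of_injOn some (fun _ hi => (mem_filter.mp hi).2)
          (Option.some_injective _).injOn
    _ ≤ O.card := card_image_le

theorem mem_legCover_of_mem {O : Finset (Unit ⊕ Fin n ⊕ Fin n)} {p : Unit ⊕ Fin n ⊕ Fin n}
    (hp : p ∈ O) {i : Fin n} (hi : leg p = some i) : i ∈ legCover O :=
  mem_filter.mpr ⟨mem_univ i, hi ▸ mem_image_of_mem leg hp⟩

theorem isVertexCover_legCover (G : SimpleGraph (Fin n)) {ν : ℝ} (hν : 0 < ν)
    (d : (Unit ⊕ Fin n ⊕ Fin n) → (Unit ⊕ Fin n ⊕ Fin n) → ℝ)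
    (hsymm : ∀ p q, d p q = d q p)
    (hxy_same : ∀ i, d (.inr (.inl i)) (.inr (.inr i)) = 1)
    (hyy : ∀ i j, i ≠ j → d (.inr (.inr i)) (.inr (.inr j)) = 2)
    (hxy : ∀ i j, i ≠ j → d (.inr (.inl i)) (.inr (.inr j)) = 3)
    (hxx_adj : ∀ i j, G.Adj i j → d (.inr (.inl i)) (.inr (.inl j)) = 4 - ν)
    {O : Finset (Unit ⊕ Fin n ⊕ Fin n)} (hO : FourPointOn d (O : Set _)ᶜ) :
    G.IsVertexCover (legCover O) := by
  intro i j hij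
  by_contra! hcov
  have hx : ∀ k ∉ legCover O, (.inr (.inl k) : Unit ⊕ Fin n ⊕ Fin n) ∉ O :=
    fun _ hk hmem => hk (mem_legCover_of_mem hmem rfl)
  have hy : ∀ k ∉ legCover O, (.inr (.inr k) : Unit ⊕ Fin n ⊕ Fin n) ∉ O :=
    fun _ hk hmem => hk (mem_legCover_of_mem hmem rfl)
  have h4 := hO _ (hx i hcov.1) _ (hy j hcov.2) _ (hx j hcov.2) _ (hy i hcov.1)
  rw [hxy i j hij.ne, hxy j i hij.ne.symm, hxx_adj i j hij, hyy j i hij.ne.symm, hxy_same i,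
    hsymm (.inr (.inr j)), hxy_same j] at h4
  rcases le_max_iff.mp h4 with h | h <;> linarith

end TreeMetricReduction

open TreeMetricReduction in
theorem stmt12_general {n : ℕ} (G : SimpleGraph (Fin n)) (ν : ℝ) (hν : 0 < ν)
    (d : (Unit ⊕ Fin n ⊕ Fin n) → (Unit ⊕ Fin n ⊕ Fin n) → ℝ)
    (hsymm : ∀ p q, d p q = d q p)
    (hdiag : ∀ p, d p p = 0)
    (hxy_same : ∀ i, d (.inr (.inl i)) (.inr (.inr i)) = 1)
    (hox : ∀ i, d (.inl ()) (.inr (.inl i)) = 2)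
    (hoy : ∀ i, d (.inl ()) (.inr (.inr i)) = 1)
    (hyy : ∀ i j, i ≠ j → d (.inr (.inr i)) (.inr (.inr j)) = 2)
    (hxy : ∀ i j, i ≠ j → d (.inr (.inl i)) (.inr (.inr j)) = 3)
    (hxx_adj : ∀ i j, G.Adj i j → d (.inr (.inl i)) (.inr (.inl j)) = 4 - ν)
    (hxx : ∀ i j, i ≠ j → ¬ G.Adj i j → d (.inr (.inl i)) (.inr (.inl j)) = 4) :
    sInf {k : ℕ | ∃ O : Finset (Unit ⊕ Fin n ⊕ Fin n), O.card = k ∧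
        ∀ p ∉ O, ∀ q ∉ O, ∀ r ∉ O, ∀ s ∉ O,
          d p q + d r s ≤ max (d p r + d q s) (d p s + d q r)} =
      sInf {k : ℕ | ∃ C : Finset (Fin n), C.card = k ∧
        ∀ i j, G.Adj i j → i ∈ C ∨ j ∈ C} := by
  change sInf {k | ∃ O : Finset (Unit ⊕ Fin n ⊕ Fin n), O.card = k ∧ FourPointOn d (↑O)ᶜ} =
    sInf {k | ∃ C : Finset (Fin n), C.card = k ∧ G.IsVertexCover C}
  apply le_antisymm
  · refine Nat.sInf_le_sInf_of_forall_exists_le ⟨n, univ, by simp, by simp⟩ ?_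
    rintro _ ⟨C, rfl, hC⟩
    exact ⟨_, ⟨_, rfl, fourPointOn_compl_image_of_isVertexCover G d hsymm hdiag hxy_same hox hoy
      hyy hxy hxx hC⟩, card_image_le⟩
  · refine Nat.sInf_le_sInf_of_forall_exists_le ⟨_, univ, rfl, by simp [FourPointOn]⟩ ?_
    rintro _ ⟨O, rfl, hO⟩
    exact ⟨_, ⟨_, rfl, isVertexCover_legCover G hν d hsymm hxy_same hyy hxy hxx_adj hO⟩,
      card_legCover_le O⟩

/-- In the tree-metric Vertex Cover reduction, the minimum outlier size (for obtaining
a tree metric, i.e. the four-point condition) equals the minimum vertex cover size. -/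
theorem stmt12 {n : ℕ} (G : SimpleGraph (Fin n)) (ν : ℝ) (hν : 0 < ν) (hν1 : ν < 1)
    (d : (Unit ⊕ Fin n ⊕ Fin n) → (Unit ⊕ Fin n ⊕ Fin n) → ℝ)
    (hsymm : ∀ p q, d p q = d q p)
    (hdiag : ∀ p, d p p = 0)
    (hxy_same : ∀ i, d (.inr (.inl i)) (.inr (.inr i)) = 1)
    (hox : ∀ i, d (.inl ()) (.inr (.inl i)) = 2)
    (hoy : ∀ i, d (.inl ()) (.inr (.inr i)) = 1)
    (hyy : ∀ i j, i ≠ j → d (.inr (.inr i)) (.inr (.inr j)) = 2)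
    (hxy : ∀ i j, i ≠ j → d (.inr (.inl i)) (.inr (.inr j)) = 3)
    (hxx_adj : ∀ i j, G.Adj i j → d (.inr (.inl i)) (.inr (.inl j)) = 4 - ν)
    (hxx : ∀ i j, i ≠ j → ¬ G.Adj i j → d (.inr (.inl i)) (.inr (.inl j)) = 4) :
    sInf {k : ℕ | ∃ O : Finset (Unit ⊕ Fin n ⊕ Fin n), O.card = k ∧
        ∀ p ∉ O, ∀ q ∉ O, ∀ r ∉ O, ∀ s ∉ O,
          d p q + d r s ≤ max (d p r + d q s) (d p s + d q r)} =
      sInf {k : ℕ | ∃ C : Finset (Fin n), C.card = k ∧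
        ∀ i j, G.Adj i j → i ∈ C ∨ j ∈ C} :=
  stmt12_general G ν hν d hsymm hdiag hxy_same hox hoy hyy hxy hxx_adj hxx
end
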